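/- Let Sk(v) be an indecomposable Kac-Moody component of type (Aff) such that the set of Cartan matrices {A^u : u in Sp(v)} is finite. Then the group Sp^D(v) is finite if and only if the spine Sp(v) is finite. -/

import Mathlib

open scoped ComplexOrder

attribute [local instance] Classical.propDecidable

namespace KMS

noncomputable section

variable (X : Type*) [Fintype X] (H : Type*) [AddCommGroup H] [Module ℂ H]

/-- A root datum: maps `a : X → h`, `b : X → h*`, parity `p`, with `a`, `b`
linearly independent families (the "injectivity" of the induced maps from the span of `X`). -/
structure RootDatum where
  a : X → H
  b : X → Module.Dual ℂ H
  p : X → ZMod 2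
  lin_indep_a : LinearIndependent ℂ a
  lin_indep_b : LinearIndependent ℂ b

variable {X H}

/-- The Cartan matrix entry `a^v_{xy} = ⟨a_v(x), b_v(y)⟩`. -/
def cartan (v : RootDatum X H) (x y : X) : ℂ := v.b y (v.a x)

/-- `x` is reflectable at `v`. -/
def Reflectable (v : RootDatum X H) (x : X) : Prop :=
  (cartan v x x = 0 ∧ v.p x = 1) ∨
  (cartan v x x ≠ 0 ∧ v.p x = 0 ∧
    ∀ y, y ≠ x → ∃ n : ℕ, 2 * cartan v x y / cartan v x x = -(n : ℂ)) ∨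
  (cartan v x x ≠ 0 ∧ v.p x = 1 ∧
    ∀ y, y ≠ x → ∃ n : ℕ, cartan v x y / cartan v x x = -(n : ℂ))

/-- The anisotropic reflexion `r_x : v → v'`. -/
def IsAnisoReflexion (x : X) (v v' : RootDatum X H) : Prop :=
  Reflectable v x ∧ cartan v x x ≠ 0 ∧ v'.p = v.p ∧
  (∀ y, v'.a y = v.a y - (2 * cartan v y x / cartan v x x) • v.a x) ∧
  (∀ y, v'.b y = v.b y - (2 * cartan v x y / cartan v x x) • v.b x)

/-- The isotropic reflexion `r_x : v → v'`. -/
def IsIsoReflexion (x : X) (v v' : RootDatum X H) : Prop :=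
  Reflectable v x ∧ cartan v x x = 0 ∧
  v'.a x = -v.a x ∧ v'.b x = -v.b x ∧ v'.p x = v.p x ∧
  ∀ y, y ≠ x →
    (cartan v x y = 0 → v'.a y = v.a y ∧ v'.b y = v.b y ∧ v'.p y = v.p y) ∧
    (cartan v x y ≠ 0 →
      v'.a y = v.a y + (cartan v y x / cartan v x y) • v.a x ∧
      v'.b y = v.b y + v.b x ∧ v'.p y = v.p y + 1)

/-- A reflexion is either anisotropic or isotropic. -/
def IsReflexion (x : X) (v v' : RootDatum X H) : Prop :=
  IsAnisoReflexion x v v' ∨ IsIsoReflexion x v v'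

/-- A path of reflexions from `v` to `u`, recorded by the ordered list of its marks. -/
inductive IsPath : RootDatum X H → List X → RootDatum X H → Prop
  | nil (v : RootDatum X H) : IsPath v [] v
  | cons {v v' u : RootDatum X H} {x : X} {ms : List X} :
      IsReflexion x v v' → IsPath v' ms u → IsPath v (x :: ms) u

/-- A path of isotropic reflexions from `v` to `u`. -/
inductive IsIsoPath : RootDatum X H → List X → RootDatum X H → Prop
  | nil (v : RootDatum X H) : IsIsoPath v [] v
  | cons {v v' u : RootDatum X H} {x : X} {ms : List X} :
      IsIsoReflexion x v v' → IsIsoPath v' ms u → IsIsoPath v (x :: ms) u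

/-- The skeleton `Sk(v)`. -/
def Skeleton (v : RootDatum X H) : Set (RootDatum X H) := {u | ∃ ms : List X, IsPath v ms u}

/-- The spine `Sp(v)`. -/
def Spine (v : RootDatum X H) : Set (RootDatum X H) := {u | ∃ ms : List X, IsIsoPath v ms u}

/-- Admissibility of the component of `v`. -/
def Admissible (v : RootDatum X H) : Prop :=
  ∀ u ∈ Skeleton v, ∀ x, Reflectable u x → ∀ y, cartan u x y = 0 → cartan u y x = 0

/-- Full reflectability of the component of `v`. -/
def FullyReflectable (v : RootDatum X H) : Prop :=
  ∀ u ∈ Skeleton v, ∀ x, Reflectable u x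

/-- Anisotropic real roots. -/
def DeltaAn (v : RootDatum X H) : Set (Module.Dual ℂ H) :=
  {α | ∃ u x, u ∈ Skeleton v ∧ Reflectable u x ∧ cartan u x x ≠ 0 ∧ u.b x = α}

/-- Isotropic real roots. -/
def DeltaIs (v : RootDatum X H) : Set (Module.Dual ℂ H) :=
  {α | ∃ u x, u ∈ Skeleton v ∧ Reflectable u x ∧ cartan u x x = 0 ∧ u.b x = α}

/-- The coroot `α^∨ = (2 / a^u_{xx}) a_u(x)` of an anisotropic real root
(independent of the choice of presentation). -/
def coroot (v : RootDatum X H) (α : Module.Dual ℂ H) : H :=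
  if h : ∃ u x, u ∈ Skeleton v ∧ Reflectable u x ∧ cartan u x x ≠ 0 ∧ u.b x = α then
    (2 / cartan h.choose h.choose_spec.choose h.choose_spec.choose) •
      h.choose.a h.choose_spec.choose
  else 0

/-- The parity `p(α)` of an anisotropic real root. -/
def rootParity (v : RootDatum X H) (α : Module.Dual ℂ H) : ZMod 2 :=
  if h : ∃ u x, u ∈ Skeleton v ∧ Reflectable u x ∧ cartan u x x ≠ 0 ∧ u.b x = α then
    h.choose.p h.choose_spec.choose
  else 0

/-- Principal roots: anisotropic simple roots at vertices of the spine. -/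
def SigmaPr (v : RootDatum X H) : Set (Module.Dual ℂ H) :=
  {α | ∃ u x, u ∈ Spine v ∧ Reflectable u x ∧ cartan u x x ≠ 0 ∧ u.b x = α}

/-- The set `π`: even principal roots together with doubles of odd principal roots. -/
def piSet (v : RootDatum X H) : Set (Module.Dual ℂ H) :=
  {α | α ∈ SigmaPr v ∧ rootParity v α = 0} ∪
  {β | ∃ α ∈ SigmaPr v, rootParity v α = 1 ∧ β = (2 : ℂ) • α}

/-- The coroot of an element of `π` (with `(2α)^∨ = α^∨ / 2` for odd principal `α`). -/
def piCoroot (v : RootDatum X H) (β : Module.Dual ℂ H) : H :=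
  if β ∈ SigmaPr v then coroot v β else (2 : ℂ)⁻¹ • coroot v ((2 : ℂ)⁻¹ • β)

/-- The Weyl group: the subgroup of `GL(h^*)` generated by the reflections
`s_α : λ ↦ λ - ⟨α^∨, λ⟩ α` for `α ∈ Δ_an`. -/
def WeylGroup (v : RootDatum X H) :
    Subgroup (Module.Dual ℂ H ≃ₗ[ℂ] Module.Dual ℂ H) :=
  Subgroup.closure
    {w | ∃ α ∈ DeltaAn v, ∀ lam : Module.Dual ℂ H, w lam = lam - lam (coroot v α) • α}

/-- `Q^+_u`: nonnegative integral combinations of the simple roots at `u`. -/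
def QPlus (u : RootDatum X H) : Set (Module.Dual ℂ H) :=
  {μ | ∃ k : X → ℕ, μ = ∑ x, (k x : ℂ) • u.b x}

/-- `Q_u`: integral combinations of the simple roots at `u`. -/
def QLattice (u : RootDatum X H) : Set (Module.Dual ℂ H) :=
  {μ | ∃ k : X → ℤ, μ = ∑ x, (k x : ℂ) • u.b x}

/-- The convex cone of finite nonnegative real combinations of elements of `S`. -/
def coneR {M : Type*} [AddCommGroup M] [Module ℝ M] (S : Set M) : Set M :=
  {μ | ∃ (T : Finset M) (c : M → ℝ), ↑T ⊆ S ∧ (∀ m, 0 ≤ c m) ∧ μ = ∑ m ∈ T, c m • m}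

/-- The totally positive cone `Q^{++}_ℝ`. -/
def QppR (v : RootDatum X H) : Set (Module.Dual ℂ H) :=
  ⋂ u ∈ Skeleton v, coneR (Set.range u.b)

/-- Indecomposability of a square matrix. -/
def IsIndecMatrix {Y : Type*} [Fintype Y] (A : Y → Y → ℂ) : Prop :=
  Fintype.card Y = 1 ∨
  ∃ (s : ℕ) (e : Fin s ≃ Y), ∀ j : Fin s,
    A (e j) (e ⟨(j.1 + 1) % s, Nat.mod_lt _ j.pos⟩) ≠ 0

/-- Indecomposability of the component of `v`. -/
def IndecComp (v : RootDatum X H) : Prop :=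
  ∀ u ∈ Spine v, IsIndecMatrix (cartan u)

/-- The Cartan matrix at `v` as a matrix. -/
def cartanMatrix (v : RootDatum X H) : Matrix X X ℂ := Matrix.of fun x y => cartan v x y

/-- A Kac-Moody component: fully reflectable, admissible and `dim h = |X| + corank A^v`. -/
def IsKacMoodyComp (v : RootDatum X H) : Prop :=
  FullyReflectable v ∧ Admissible v ∧
  Module.finrank ℂ H = Fintype.card X + (Fintype.card X - (cartanMatrix v).rank)

/-- Type (Aff): the real span of `Q^{++}_ℝ` is one-dimensional. -/
def TypeAff (v : RootDatum X H) : Prop :=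
  Module.finrank ℝ (Submodule.span ℝ (QppR v)) = 1

/-- The set `π_S` of `S`-principal elements. -/
def piS (v : RootDatum X H) : Set (Module.Dual ℂ H) :=
  {α | ∃ u x, u ∈ Spine v ∧
    ((u.p x = 0 ∧ α = u.b x) ∨ (u.p x = 1 ∧ cartan u x x ≠ 0 ∧ α = (2 : ℂ) • u.b x))}

/-- `D`-equivalence of Cartan data. -/
def DEquivTo (u v : RootDatum X H) : Prop :=
  u.p = v.p ∧ ∃ D : X → ℂ, (∀ x, D x ≠ 0) ∧ ∀ x y, cartan u x y = D x * cartan v x y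

/-- `Sk^D(v)`. -/
def SkD (v : RootDatum X H) : Set (RootDatum X H) := {u | u ∈ Skeleton v ∧ DEquivTo u v}

/-- `Sp^D(v)`. -/
def SpD (v : RootDatum X H) : Set (RootDatum X H) := {u | u ∈ Spine v ∧ DEquivTo u v}

/-- `StarRel v u₁ u₂ u₃` says `u₁ * u₂ = u₃`, i.e. `σ^{u₁}(u₂) = u₃`: some path from `v`
ends at `u₂` and its namesake path from `u₁` ends at `u₃`. -/
def StarRel (v u₁ u₂ u₃ : RootDatum X H) : Prop :=
  ∃ ms : List X, IsPath v ms u₂ ∧ IsPath u₁ ms u₃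

/-- `u` is the vertex `w·v` for `w` in the Weyl group. -/
def VertexOf (v : RootDatum X H) (w : Module.Dual ℂ H ≃ₗ[ℂ] Module.Dual ℂ H)
    (u : RootDatum X H) : Prop :=
  u ∈ Skeleton v ∧ ∀ x, u.b x = w (v.b x)

end

/-! The isotropic reflexion `r_x` is an explicit shear of the root datum whose coefficients,
and hence the new Cartan datum `(A, p)`, depend only on the old Cartan datum; it is an involution.
So an isotropic path can be run from any root datum with the same Cartan datum as its start,
and reversed. If `w ∈ Sp(v)` is reached by the path `ℓ` and `u ∈ Sp(v)` has the Cartan datum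
of `w`, running `ℓ` reversed from `u` ends in `Sp^D(v)`, and running `ℓ` from there returns to
`u`. Thus each of the finitely many Cartan-datum fibres of `Sp(v)` is covered by the endpoints
of one path started in `Sp^D(v)`. -/

theorem _root_.LinearIndependent.add_smul_self {ι K M : Type*} [Field K] [AddCommGroup M]
    [Module K M] {f : ι → M} (hf : LinearIndependent K f) {c : ι → K} {i : ι}
    (hc : 1 + c i ≠ 0) : LinearIndependent K (fun j => f j + c j • f i) := by
  classical
  let u : ι → Kˣ := Function.update 1 i (Units.mk0 _ hc)
  have hshear : (fun j => f j + c j • f i) =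
      (u • f) + (fun j => (if j = i then 0 else c j / (1 + c i)) • (u • f) i) := by
    funext j
    rcases eq_or_ne j i with rfl | hj
    · simp [u, add_smul]
    · simp [u, hj, smul_smul, div_mul_cancel₀ _ hc]
  rw [hshear]
  exact (linearIndependent_add_smul_iff (by simp)).2 (hf.units_smul u)

/- Coefficients of the isotropic reflexion `r_x` as a shear: `a_{v'}(y) = a_v(y) + c_y a_v(x)`,
with `c_x = -2` encoding `a_{v'}(x) = -a_v(x)`, and likewise for `b`. -/

noncomputable def isoCoeffA {X : Type*} (C : X → X → ℂ) (x y : X) : ℂ :=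
  if y = x then -2 else if C x y = 0 then 0 else C y x / C x y

noncomputable def isoCoeffB {X : Type*} (C : X → X → ℂ) (x y : X) : ℂ :=
  if y = x then -2 else if C x y = 0 then 0 else 1

noncomputable def isoParityShift {X : Type*} (C : X → X → ℂ) (x y : X) : ZMod 2 :=
  if y = x then 0 else if C x y = 0 then 0 else 1

section IsotropicReflexion

variable {X : Type*} {H : Type*} [AddCommGroup H] [Module ℂ H]

theorem RootDatum.ext {u w : RootDatum X H} (ha : u.a = w.a) (hb : u.b = w.b) (hp : u.p = w.p) :
    u = w := by
  cases u; cases w; simp_all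

def cartanDatum (u : RootDatum X H) : (X → X → ℂ) × (X → ZMod 2) := (cartan u, u.p)

@[simps]
noncomputable def isoReflect (w : RootDatum X H) (x : X) : RootDatum X H where
  a y := w.a y + isoCoeffA (cartan w) x y • w.a x
  b y := w.b y + isoCoeffB (cartan w) x y • w.b x
  p y := w.p y + isoParityShift (cartan w) x y
  lin_indep_a := w.lin_indep_a.add_smul_self (by norm_num [isoCoeffA])
  lin_indep_b := w.lin_indep_b.add_smul_self (by norm_num [isoCoeffB])

theorem isoReflect_a_self (w : RootDatum X H) (x : X) : (isoReflect w x).a x = -w.a x := by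
  simp only [isoReflect, isoCoeffA, if_true]; module

theorem isoReflect_b_self (w : RootDatum X H) (x : X) : (isoReflect w x).b x = -w.b x := by
  simp only [isoReflect, isoCoeffB, if_true]; module

theorem isoReflect_p_self (w : RootDatum X H) (x : X) : (isoReflect w x).p x = w.p x := by
  simp [isoReflect, isoParityShift]

theorem isIsoReflexion_iff {x : X} {w w' : RootDatum X H} :
    IsIsoReflexion x w w' ↔ Reflectable w x ∧ cartan w x x = 0 ∧ w' = isoReflect w x := by
  constructor
  · rintro ⟨hr, hxx, hax, hbx, hpx, hrest⟩
    refine ⟨hr, hxx, ?_⟩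
    have hcomp : ∀ y, w'.a y = (isoReflect w x).a y ∧ w'.b y = (isoReflect w x).b y ∧
        w'.p y = (isoReflect w x).p y := by
      intro y
      rcases eq_or_ne y x with rfl | hy
      · exact ⟨by rw [hax, isoReflect_a_self], by rw [hbx, isoReflect_b_self],
          by rw [hpx, isoReflect_p_self]⟩
      by_cases hxy : cartan w x y = 0
      · simpa [isoCoeffA, isoCoeffB, isoParityShift, hy, hxy] using (hrest y hy).1 hxy
      · simpa [isoCoeffA, isoCoeffB, isoParityShift, hy, hxy] using (hrest y hy).2 hxy
    exact RootDatum.ext (funext fun y => (hcomp y).1) (funext fun y => (hcomp y).2.1)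
      (funext fun y => (hcomp y).2.2)
  · rintro ⟨hr, hxx, rfl⟩
    refine ⟨hr, hxx, ?_, ?_, ?_, fun y hy => ⟨fun hxy => ?_, fun hxy => ?_⟩⟩
    · exact isoReflect_a_self w x
    · exact isoReflect_b_self w x
    · exact isoReflect_p_self w x
    all_goals simp [isoCoeffA, isoCoeffB, isoParityShift, hy, hxy]

theorem cartan_isoReflect (w : RootDatum X H) (x y z : X) :
    cartan (isoReflect w x) y z = cartan w y z + isoCoeffA (cartan w) x y * cartan w x z
      + isoCoeffB (cartan w) x z * (cartan w y x + isoCoeffA (cartan w) x y * cartan w x x) := by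
  simp only [cartan, isoReflect, map_add, map_smul, LinearMap.add_apply, LinearMap.smul_apply,
    smul_eq_mul]
  ring

theorem cartanDatum_isoReflect_congr {u w : RootDatum X H} (h : cartanDatum u = cartanDatum w)
    (x : X) : cartanDatum (isoReflect u x) = cartanDatum (isoReflect w x) := by
  obtain ⟨hc, hp⟩ := Prod.ext_iff.1 h
  simp only [cartanDatum] at hc hp ⊢
  refine Prod.ext (funext₂ fun y z => ?_) (funext fun y => ?_)
  · simp only [cartan_isoReflect, hc]
  · simp only [isoReflect, hc, hp]

theorem reflectable_iff_of_cartanDatum_eq {u w : RootDatum X H}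
    (h : cartanDatum u = cartanDatum w) (x : X) : Reflectable u x ↔ Reflectable w x := by
  obtain ⟨hc, hp⟩ := Prod.ext_iff.1 h
  simp only [cartanDatum] at hc hp
  simp only [Reflectable, hc, hp]

theorem Reflectable.parity_eq_one {w : RootDatum X H} {x : X} (hr : Reflectable w x)
    (hxx : cartan w x x = 0) : w.p x = 1 := by
  rcases hr with ⟨-, h⟩ | ⟨h, -⟩ | ⟨h, -⟩
  exacts [h, absurd hxx h, absurd hxx h]

section Involution

variable {w : RootDatum X H} {x : X}

theorem cartan_isoReflect_self_left (hxx : cartan w x x = 0) (y : X) :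
    cartan (isoReflect w x) x y = -cartan w x y := by
  rw [cartan_isoReflect, hxx]
  simp only [isoCoeffA, if_true]
  ring

theorem cartan_isoReflect_self_right (hxx : cartan w x x = 0) (y : X) :
    cartan (isoReflect w x) y x = -cartan w y x := by
  rw [cartan_isoReflect, hxx]
  simp only [isoCoeffB, if_true]
  ring

theorem isoReflect_isoReflect (hxx : cartan w x x = 0) : isoReflect (isoReflect w x) x = w := by
  have hA : isoCoeffA (cartan (isoReflect w x)) x = isoCoeffA (cartan w) x := funext fun y => by
    simp [isoCoeffA, cartan_isoReflect_self_left hxx, cartan_isoReflect_self_right hxx,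
      neg_div_neg_eq]
  have hB : isoCoeffB (cartan (isoReflect w x)) x = isoCoeffB (cartan w) x := funext fun y => by
    simp [isoCoeffB, cartan_isoReflect_self_left hxx]
  have hS : isoParityShift (cartan (isoReflect w x)) x = isoParityShift (cartan w) x :=
    funext fun y => by simp [isoParityShift, cartan_isoReflect_self_left hxx]
  refine RootDatum.ext (funext fun y => ?_) (funext fun y => ?_) (funext fun y => ?_)
  · rw [isoReflect_a, hA, isoReflect_a_self, isoReflect_a]; module
  · rw [isoReflect_b, hB, isoReflect_b_self, isoReflect_b]; module
  · rw [isoReflect_p, hS, isoReflect_p, add_assoc, CharTwo.add_self_eq_zero, add_zero]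

end Involution

theorem IsIsoReflexion.eq_isoReflect {x : X} {w w' : RootDatum X H} (h : IsIsoReflexion x w w') :
    w' = isoReflect w x :=
  (isIsoReflexion_iff.1 h).2.2

theorem IsIsoReflexion.symm {x : X} {w w' : RootDatum X H} (h : IsIsoReflexion x w w') :
    IsIsoReflexion x w' w := by
  obtain ⟨hr, hxx, rfl⟩ := isIsoReflexion_iff.1 h
  have hxx' : cartan (isoReflect w x) x x = 0 := by
    rw [cartan_isoReflect_self_left hxx, hxx, neg_zero]
  refine isIsoReflexion_iff.2 ⟨Or.inl ⟨hxx', ?_⟩, hxx', (isoReflect_isoReflect hxx).symm⟩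
  rw [isoReflect_p_self, hr.parity_eq_one hxx]

theorem IsIsoReflexion.exists_of_cartanDatum_eq {x : X} {w w' u : RootDatum X H}
    (h : IsIsoReflexion x w w') (hu : cartanDatum u = cartanDatum w) :
    ∃ u', IsIsoReflexion x u u' ∧ cartanDatum u' = cartanDatum w' := by
  obtain ⟨hr, hxx, rfl⟩ := isIsoReflexion_iff.1 h
  have huxx : cartan u x x = 0 := by rw [show cartan u = cartan w from congrArg Prod.fst hu, hxx]
  exact ⟨isoReflect u x, isIsoReflexion_iff.2 ⟨(reflectable_iff_of_cartanDatum_eq hu x).2 hr,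
    huxx, rfl⟩, cartanDatum_isoReflect_congr hu x⟩

theorem IsIsoPath.unique {v a b : RootDatum X H} {l : List X} (ha : IsIsoPath v l a)
    (hb : IsIsoPath v l b) : a = b := by
  induction ha with
  | nil => cases hb; rfl
  | cons hr _ ih =>
    cases hb with
    | cons hr' hp' => exact ih (by rwa [hr'.eq_isoReflect, ← hr.eq_isoReflect] at hp')

theorem IsIsoPath.append {a b c : RootDatum X H} {l l' : List X} (h : IsIsoPath a l b)
    (h' : IsIsoPath b l' c) : IsIsoPath a (l ++ l') c := by
  induction h with
  | nil => exact h'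
  | cons hr _ ih => exact .cons hr (ih h')

theorem IsIsoPath.reverse {a b : RootDatum X H} {l : List X} (h : IsIsoPath a l b) :
    IsIsoPath b l.reverse a := by
  induction h with
  | nil v => exact .nil v
  | cons hr _ ih => simpa using ih.append (.cons hr.symm (.nil _))

theorem IsIsoPath.exists_of_cartanDatum_eq {w w' u : RootDatum X H} {l : List X}
    (h : IsIsoPath w l w') (hu : cartanDatum u = cartanDatum w) :
    ∃ u', IsIsoPath u l u' ∧ cartanDatum u' = cartanDatum w' := by
  induction h generalizing u with
  | nil => exact ⟨u, .nil u, hu⟩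
  | cons hr _ ih =>
    obtain ⟨u₁, hr₁, hu₁⟩ := hr.exists_of_cartanDatum_eq hu
    obtain ⟨u', hp, hu'⟩ := ih hu₁
    exact ⟨u', .cons hr₁ hp, hu'⟩

theorem DEquivTo.of_cartanDatum_eq {u v : RootDatum X H} (h : cartanDatum u = cartanDatum v) :
    DEquivTo u v :=
  ⟨congrArg Prod.snd h, fun _ => 1, fun _ => one_ne_zero, fun x y => by
    rw [one_mul, show cartan u = cartan v from congrArg Prod.fst h]⟩

theorem exists_mem_SpD_isIsoPath {v w u : RootDatum X H} {l : List X} (hw : IsIsoPath v l w)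
    (hu : u ∈ Spine v) (huw : cartanDatum u = cartanDatum w) :
    ∃ u' ∈ SpD v, IsIsoPath u' l u := by
  obtain ⟨u', hp, hu'⟩ := hw.reverse.exists_of_cartanDatum_eq huw
  obtain ⟨ms, hms⟩ := hu
  refine ⟨u', ⟨⟨ms ++ l.reverse, hms.append hp⟩, .of_cartanDatum_eq hu'⟩, ?_⟩
  simpa using hp.reverse

theorem finite_spine_inter_fiber {v w : RootDatum X H} (hSpD : (SpD v).Finite)
    (hw : w ∈ Spine v) :
    (Spine v ∩ cartanDatum ⁻¹' {cartanDatum w}).Finite := by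
  obtain ⟨l, hl⟩ := hw
  refine (hSpD.biUnion fun u' _ => Set.Subsingleton.finite (s := {u | IsIsoPath u' l u})
    fun a ha b hb => IsIsoPath.unique ha hb).subset ?_
  rintro u ⟨hu, huw⟩
  obtain ⟨u', hu', hp⟩ := exists_mem_SpD_isIsoPath hl hu huw
  exact Set.mem_biUnion hu' hp

end IsotropicReflexion

theorem stmt18_general {X : Type*} [Fintype X] {H : Type*} [AddCommGroup H] [Module ℂ H]
    (v : RootDatum X H) (hfin : (cartan '' Spine v).Finite) :
    (SpD v).Finite ↔ (Spine v).Finite := by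
  refine ⟨fun hSpD => ?_, fun h => h.subset fun u hu => hu.1⟩
  refine Set.Finite.of_finite_fibers cartanDatum ((hfin.prod Set.finite_univ).subset ?_) ?_
  · rintro _ ⟨u, hu, rfl⟩
    exact ⟨⟨u, hu, rfl⟩, trivial⟩
  · rintro _ ⟨w, hw, rfl⟩
    exact finite_spine_inter_fiber hSpD hw

/-- For an indecomposable Kac-Moody component of type (Aff) with finitely
many Cartan matrices along the spine, `Sp^D(v)` is finite iff the spine is finite. -/
theorem stmt18 {X : Type*} [Fintype X] {H : Type*} [AddCommGroup H] [Module ℂ H]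
    [FiniteDimensional ℂ H] (v : RootDatum X H)
    (hKM : IsKacMoodyComp v) (hind : IndecComp v) (haff : TypeAff v)
    (hfin : (cartan '' Spine v).Finite) :
    (SpD v).Finite ↔ (Spine v).Finite :=
  stmt18_general v hfin

end KMS
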